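/- Let Γ be a commutative monoid, A a finitely generated Γ-graded monoid, and H_A its Hall algebra. The subspace J^{gr} spanned by the delta functions δ_M over isomorphism classes of finite A-modules M that do NOT admit a Γ-grading is a Hopf ideal of H_A, so that H_A/J^{gr} is a graded, connected, co-commutative Hopf algebra. -/

import Mathlib

universe u v

/-- A module over a monoid-with-zero `A` on a pointed set ("vector space over 𝔽₁"):
a pointed set `(M, 0)` with an action of `A` satisfying `1•m = m`, `(a*b)•m = a•(b•m)`,
`0•m = 0` and `a•0 = 0`. -/
structure FModule (A : Type v) [MonoidWithZero A] : Type (max (u + 1) v) where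
  carrier : Type u
  zero : carrier
  smul : A → carrier → carrier
  one_smul : ∀ m, smul 1 m = m
  mul_smul : ∀ a b m, smul (a * b) m = smul a (smul b m)
  zero_smul : ∀ m, smul 0 m = zero
  smul_zero : ∀ a, smul a zero = zero

namespace FModule

variable {A : Type v} [MonoidWithZero A]

/-- `N` is an `A`-submodule of `M` : a subset containing the basepoint and closed under
the action of `A`. -/
def IsSubmod (M : FModule A) (N : Set M.carrier) : Prop :=
  M.zero ∈ N ∧ ∀ (a : A), ∀ m ∈ N, M.smul a m ∈ N

/-- The submodule `N ⊆ M` as an `A`-module in its own right. -/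
def sub (M : FModule A) (N : Set M.carrier) (h : M.IsSubmod N) : FModule A where
  carrier := N
  zero := ⟨M.zero, h.1⟩
  smul a m := ⟨M.smul a m.1, h.2 a m.1 m.2⟩
  one_smul m := Subtype.ext (M.one_smul m.1)
  mul_smul a b m := Subtype.ext (M.mul_smul a b m.1)
  zero_smul m := Subtype.ext (M.zero_smul m.1)
  smul_zero a := Subtype.ext (M.smul_zero a)

open Classical in
/-- The quotient `M/N` of `M` by a submodule `N`: the pointed set `(M ∖ N) ∪ {0}`
with the induced `A`-action. -/
noncomputable def quot (M : FModule A) (N : Set M.carrier) (h : M.IsSubmod N) :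
    FModule A where
  carrier := {x : M.carrier // x = M.zero ∨ x ∉ N}
  zero := ⟨M.zero, Or.inl rfl⟩
  smul a m := if hmem : M.smul a m.1 ∈ N then ⟨M.zero, Or.inl rfl⟩
    else ⟨M.smul a m.1, Or.inr hmem⟩
  one_smul := by
    classical
    rintro ⟨x, hx⟩
    by_cases hmem : M.smul 1 x ∈ N
    · have hxN : x ∈ N := by rwa [M.one_smul] at hmem
      have hx0 : x = M.zero := hx.resolve_right fun hc => hc hxN
      simp only [dif_pos hmem]
      exact Subtype.ext hx0.symm
    · simp only [dif_neg hmem]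
      exact Subtype.ext (M.one_smul x)
  mul_smul := by
    classical
    rintro a b ⟨x, hx⟩
    by_cases hb : M.smul b x ∈ N
    · have hab : M.smul (a * b) x ∈ N := by
        rw [M.mul_smul]; exact h.2 a _ hb
      have h0 : M.smul a M.zero ∈ N := by
        rw [M.smul_zero]; exact h.1
      simp only [dif_pos hb, dif_pos hab, dif_pos h0]
    · by_cases hab : M.smul a (M.smul b x) ∈ N
      · have hab' : M.smul (a * b) x ∈ N := by rw [M.mul_smul]; exact hab
        simp only [dif_pos hab', dif_neg hb, dif_pos hab]
      · have hab' : M.smul (a * b) x ∉ N := by rw [M.mul_smul]; exact hab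
        simp only [dif_neg hab', dif_neg hb, dif_neg hab]
        exact Subtype.ext (M.mul_smul a b x)
  zero_smul := by
    classical
    rintro ⟨x, hx⟩
    have h0 : M.smul 0 x ∈ N := by rw [M.zero_smul]; exact h.1
    simp only [dif_pos h0]
  smul_zero := by
    classical
    intro a
    have h0 : M.smul a M.zero ∈ N := by rw [M.smul_zero]; exact h.1
    simp only [dif_pos h0]

/-- A morphism of `A`-modules: a pointed map compatible with the `A`-action. -/
structure Hom (M N : FModule A) where
  toFun : M.carrier → N.carrier
  map_zero : toFun M.zero = N.zero
  map_smul : ∀ a m, toFun (M.smul a m) = N.smul a (toFun m)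

/-- A morphism is normal if every fibre other than the fibre of the basepoint has at
most one element. -/
def Hom.Normal {M N : FModule A} (f : Hom M N) : Prop :=
  ∀ m m', f.toFun m = f.toFun m' → f.toFun m ≠ N.zero → m = m'

/-- Composition of morphisms. -/
def Hom.comp {M N L : FModule A} (g : Hom N L) (f : Hom M N) : Hom M L where
  toFun := g.toFun ∘ f.toFun
  map_zero := by
    show g.toFun (f.toFun M.zero) = L.zero
    rw [f.map_zero, g.map_zero]
  map_smul a m := by
    show g.toFun (f.toFun (M.smul a m)) = L.smul a (g.toFun (f.toFun m))
    rw [f.map_smul, g.map_smul]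

/-- An isomorphism of `A`-modules. -/
structure Iso (M N : FModule A) where
  toEquiv : M.carrier ≃ N.carrier
  map_zero : toEquiv M.zero = N.zero
  map_smul : ∀ a m, toEquiv (M.smul a m) = N.smul a (toEquiv m)

def Iso.refl (M : FModule A) : Iso M M := ⟨Equiv.refl _, rfl, fun _ _ => rfl⟩

def Iso.symm {M N : FModule A} (e : Iso M N) : Iso N M where
  toEquiv := e.toEquiv.symm
  map_zero := by rw [Equiv.symm_apply_eq, e.map_zero]
  map_smul a m := by
    apply e.toEquiv.injective
    rw [e.map_smul, Equiv.apply_symm_apply, Equiv.apply_symm_apply]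

def Iso.trans {M N L : FModule A} (e : Iso M N) (f : Iso N L) : Iso M L where
  toEquiv := e.toEquiv.trans f.toEquiv
  map_zero := by
    simp only [Equiv.trans_apply, e.map_zero, f.map_zero]
  map_smul a m := by
    simp only [Equiv.trans_apply, e.map_smul, f.map_smul]

/-- The wedge sum (direct sum, coproduct) `M ⊕ N` of two `A`-modules, realized as the
subset of `M × N` of pairs with at least one coordinate equal to the basepoint. -/
def wedge (M N : FModule A) : FModule A where
  carrier := {p : M.carrier × N.carrier // p.1 = M.zero ∨ p.2 = N.zero}
  zero := ⟨(M.zero, N.zero), Or.inl rfl⟩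
  smul a p := ⟨(M.smul a p.1.1, N.smul a p.1.2), by
    rcases p.2 with h1 | h2
    · exact Or.inl (by rw [h1, M.smul_zero])
    · exact Or.inr (by rw [h2, N.smul_zero])⟩
  one_smul p := Subtype.ext (Prod.ext (M.one_smul _) (N.one_smul _))
  mul_smul a b p := Subtype.ext (Prod.ext (M.mul_smul _ _ _) (N.mul_smul _ _ _))
  zero_smul p := Subtype.ext (Prod.ext (M.zero_smul _) (N.zero_smul _))
  smul_zero a := Subtype.ext (Prod.ext (M.smul_zero _) (N.smul_zero _))

/-- A module `M` is of type α if every `a ∈ A` acts on `M` by a normal map of pointed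
sets, i.e. `a•m₁ = a•m₂` implies `m₁ = m₂` or `a•m₁ = a•m₂ = 0`. -/
def TypeAlpha (M : FModule A) : Prop :=
  ∀ (a : A) (m₁ m₂ : M.carrier),
    M.smul a m₁ = M.smul a m₂ → m₁ = m₂ ∨ M.smul a m₁ = M.zero

/-- A module is indecomposable if it is nonzero and admits no decomposition as a wedge
sum (internally: a pair of submodules covering `M` and meeting only in `0`) with both
pieces nonzero. -/
def Indecomposable (M : FModule A) : Prop :=
  (∃ m : M.carrier, m ≠ M.zero) ∧
  ∀ P Q : Set M.carrier, M.IsSubmod P → M.IsSubmod Q → P ∪ Q = Set.univ →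
    P ∩ Q ⊆ {M.zero} → P = {M.zero} ∨ Q = {M.zero}

end FModule
namespace FModule

variable {A : Type v} [MonoidWithZero A]

section Graded

variable {Γ : Type*} [AddCommMonoid Γ]

/-- `dA` is a `Γ`-grading of the monoid `A`: every nonzero element has a degree,
`1 ∈ A₀`, and `A_γ · A_δ ⊆ A_{γ+δ}`. -/
def IsMonoidGrading (dA : A → Γ) : Prop :=
  dA 1 = 0 ∧ ∀ a b : A, a * b ≠ 0 → dA (a * b) = dA a + dA b

/-- `g` is a grading of the `A`-module `M` compatible with the grading `dA` of `A`:
`0_M ∈ M₀` and `A_γ · M_δ ⊆ M_{γ+δ}`. -/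
def IsGrading (dA : A → Γ) (M : FModule A) (g : M.carrier → Γ) : Prop :=
  g M.zero = 0 ∧ ∀ (a : A) (m : M.carrier),
    M.smul a m ≠ M.zero → g (M.smul a m) = dA a + g m

/-- `M` admits a grading. -/
def AdmitsGrading (dA : A → Γ) (M : FModule A) : Prop :=
  ∃ g : M.carrier → Γ, IsGrading dA M g

end Graded

section Spec

/-- An ideal of a monoid. -/
def IsMonIdeal (I : Set A) : Prop := ∀ a ∈ I, ∀ b : A, b * a ∈ I

/-- A prime ideal of a monoid: a proper ideal with `xy ∈ p → x ∈ p ∨ y ∈ p`. -/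
def IsPrimeIdeal (p : Set A) : Prop :=
  IsMonIdeal p ∧ p ≠ Set.univ ∧ ∀ x y : A, x * y ∈ p → x ∈ p ∨ y ∈ p

variable (A) in
/-- The prime spectrum of the monoid `A`. -/
def MSpec := {p : Set A // IsPrimeIdeal p}

/-- The closed subset `V(I)` of `MSpec A` determined by a set `I ⊆ A`. -/
def zeroLocus (I : Set A) : Set (MSpec A) := {p | I ⊆ p.1}

/-- Closed subsets of `MSpec A`. -/
def IsClosedM (Z : Set (MSpec A)) : Prop := ∃ I : Set A, IsMonIdeal I ∧ Z = zeroLocus I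

/-- The annihilator of an `A`-module. -/
def Ann (M : FModule A) : Set A := {a : A | ∀ m : M.carrier, M.smul a m = M.zero}

/-- The (scheme-theoretic) support of the module `M`: `Supp M = V(Ann M)`. -/
def Supp (M : FModule A) : Set (MSpec A) := zeroLocus (Ann M)

/-- The radical of a set in a monoid. -/
def mradical (I : Set A) : Set A := {a : A | ∃ k : ℕ, 0 < k ∧ a ^ k ∈ I}

end Spec

end FModule
namespace FModule

variable (A : Type v) [MonoidWithZero A]

/-- A finite `A`-module, bundled. -/
def FinFMod := {M : FModule.{0} A // Finite M.carrier}

variable {A}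

/-- The submodule, as a finite bundled module. -/
def FinFMod.sub (M : FinFMod A) (N : Set M.1.carrier) (h : M.1.IsSubmod N) : FinFMod A :=
  ⟨M.1.sub N h, by haveI := M.2; exact inferInstanceAs (Finite ↥N)⟩

/-- The quotient, as a finite bundled module. -/
noncomputable def FinFMod.quot (M : FinFMod A) (N : Set M.1.carrier) (h : M.1.IsSubmod N) :
    FinFMod A :=
  ⟨M.1.quot N h, by
    haveI := M.2
    exact inferInstanceAs (Finite {x : M.1.carrier // x = M.1.zero ∨ x ∉ N})⟩

/-- The wedge sum, as a finite bundled module. -/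
def FinFMod.wedge (M N : FinFMod A) : FinFMod A :=
  ⟨M.1.wedge N.1, by
    haveI := M.2; haveI := N.2
    exact inferInstanceAs
      (Finite {p : M.1.carrier × N.1.carrier // p.1 = M.1.zero ∨ p.2 = N.1.zero})⟩

/-- The zero module. -/
def FinFMod.zeroMod : FinFMod A :=
  ⟨⟨PUnit, PUnit.unit, fun _ _ => PUnit.unit, fun _ => rfl, fun _ _ _ => rfl,
    fun _ => rfl, fun _ => rfl⟩, inferInstance⟩

variable (A)

/-- Isomorphism classes of finite `A`-modules. -/
instance fmodSetoid : Setoid (FinFMod A) where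
  r M N := Nonempty (Iso M.1 N.1)
  iseqv := ⟨fun M => ⟨Iso.refl M.1⟩, fun ⟨e⟩ => ⟨e.symm⟩, fun ⟨e⟩ ⟨f⟩ => ⟨e.trans f⟩⟩

/-- The set of isomorphism classes of finite `A`-modules. -/
def IsoCl := Quotient (fmodSetoid A)

variable {A}

/-- The isomorphism class of a finite module. -/
def clsOf (M : FinFMod A) : IsoCl A := Quotient.mk _ M

/-- The collection of submodules of a module. -/
def Submods (M : FModule A) := {N : Set M.carrier // M.IsSubmod N}

open scoped Classical in
/-- The Hall algebra convolution product:
`(f ⋆ g)(M) = ∑_{N ⊆ M} f(M/N) g(N)`, the (finite) sum being over all submodules. -/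
noncomputable def hallMul (f g : IsoCl A → ℚ) : IsoCl A → ℚ := fun c =>
  ∑ᶠ N : Submods (Quotient.out c).1,
    f (clsOf ((Quotient.out c).quot N.1 N.2)) * g (clsOf ((Quotient.out c).sub N.1 N.2))

open scoped Classical in
/-- The delta function supported at a single isomorphism class. -/
noncomputable def deltaF (c : IsoCl A) : IsoCl A → ℚ := fun d => if d = c then 1 else 0

/-- Finitely supported functions (the underlying space of the Hall algebra). -/
def FinSupp (f : IsoCl A → ℚ) : Prop := (Function.support f).Finite

/-- Finitely supported functions of two variables. -/
def FinSupp₂ (F : IsoCl A → IsoCl A → ℚ) : Prop :=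
  (Function.support (Function.uncurry F)).Finite

/-- The Hall algebra coproduct, in coordinates: `Δ(f)(M, N) = f(M ⊕ N)`. -/
noncomputable def coprodF (f : IsoCl A → ℚ) : IsoCl A → IsoCl A → ℚ := fun c d =>
  f (clsOf ((Quotient.out c).wedge (Quotient.out d)))

/-- The componentwise convolution product on two-variable functions
(the product on `H ⊗ H` in coordinates). -/
noncomputable def hallMul₂ (F G : IsoCl A → IsoCl A → ℚ) : IsoCl A → IsoCl A → ℚ :=
  fun c d =>
    ∑ᶠ N : Submods (Quotient.out c).1, ∑ᶠ P : Submods (Quotient.out d).1,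
      F (clsOf ((Quotient.out c).quot N.1 N.2)) (clsOf ((Quotient.out d).quot P.1 P.2)) *
      G (clsOf ((Quotient.out c).sub N.1 N.2)) (clsOf ((Quotient.out d).sub P.1 P.2))

/-- The dimension of an isomorphism class: `dim M = |M| - 1`. -/
noncomputable def dimCl (c : IsoCl A) : ℕ := Nat.card (Quotient.out c).1.carrier - 1

/-- The counit: evaluation at the class of the zero module. -/
noncomputable def counitF (f : IsoCl A → ℚ) : ℚ := f (clsOf (FinFMod.zeroMod))

end FModule
namespace FModule

variable {A : Type v} [MonoidWithZero A] {Γ : Type*} [AddCommMonoid Γ]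

/-- An isomorphism class of finite `A`-modules admitting a `Γ`-grading. -/
def ClAdmitsGrading (dA : A → Γ) (c : IsoCl A) : Prop :=
  AdmitsGrading dA (Quotient.out c).1

/-- Membership in `J^{gr} ⊆ H_A`: the span of the delta functions of the classes that
do NOT admit a grading, i.e. the finitely supported functions vanishing on all classes
admitting a grading. -/
def MemJgr (dA : A → Γ) (f : IsoCl A → ℚ) : Prop :=
  FinSupp f ∧ ∀ c : IsoCl A, ClAdmitsGrading dA c → f c = 0

end FModule

/-!
Admitting a grading is invariant under isomorphism and passes to submodules, quotients and
wedge sums, and the zero module is graded. So `J^{gr}`, the finitely supported functions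
vanishing on graded classes, is killed by the counit; it absorbs convolution on both sides,
since each term of `(f ⋆ g)(M)` evaluates `f` at `M/N` and `g` at `N`, both graded when `M`
is; and `Δf` splits according to whether the first factor is graded, the second part
vanishing on pairs of graded classes because their wedge sum is graded. Finite generation
of `A` leaves only finitely many classes of each cardinality, which keeps all these
functions finitely supported.
-/

namespace FModule

variable {A : Type v} [MonoidWithZero A]

theorem nonempty_iso_out_clsOf (M : FinFMod A) :
    Nonempty (Iso (Quotient.out (clsOf M)).1 M.1) :=
  Quotient.exact (Quotient.out_eq (clsOf M))

section Grading

variable {Γ : Type*} [AddCommMonoid Γ] {dA : A → Γ}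

theorem AdmitsGrading.of_iso {M N : FModule A} (e : Iso M N) (h : AdmitsGrading dA M) :
    AdmitsGrading dA N := by
  obtain ⟨g, hg0, hgs⟩ := h
  refine ⟨g ∘ e.symm.toEquiv, by simp [e.symm.map_zero, hg0], fun a m hm => ?_⟩
  have hm' : M.smul a (e.symm.toEquiv m) ≠ M.zero := by
    rwa [← e.symm.map_smul, ← e.symm.map_zero, e.symm.toEquiv.injective.ne_iff]
  simp only [Function.comp_apply, e.symm.map_smul, hgs a _ hm']

theorem AdmitsGrading.sub {M : FModule A} {N : Set M.carrier} (hN : M.IsSubmod N)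
    (h : AdmitsGrading dA M) : AdmitsGrading dA (M.sub N hN) := by
  obtain ⟨g, hg0, hgs⟩ := h
  exact ⟨fun x => g x.1, hg0, fun a m hm => hgs a m.1 fun hc => hm (Subtype.ext hc)⟩

theorem AdmitsGrading.quot {M : FModule A} {N : Set M.carrier} (hN : M.IsSubmod N)
    (h : AdmitsGrading dA M) : AdmitsGrading dA (M.quot N hN) := by
  classical
  obtain ⟨g, hg0, hgs⟩ := h
  refine ⟨fun x => g x.1, hg0, fun a m hm => ?_⟩
  by_cases hmem : M.smul a m.1 ∈ N
  · exact absurd (dif_pos hmem) hm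
  · have hval : ((M.quot N hN).smul a m).1 = M.smul a m.1 :=
      congrArg Subtype.val (dif_neg hmem)
    simp only [hval]
    exact hgs a m.1 fun hc => hmem (by rw [hc]; exact hN.1)

theorem AdmitsGrading.wedge {M N : FModule A} (hM : AdmitsGrading dA M)
    (hN : AdmitsGrading dA N) : AdmitsGrading dA (M.wedge N) := by
  classical
  obtain ⟨g₁, hg₁0, hg₁s⟩ := hM
  obtain ⟨g₂, hg₂0, hg₂s⟩ := hN
  refine ⟨fun p => if p.1.2 = N.zero then g₁ p.1.1 else g₂ p.1.2,
    (if_pos rfl).trans hg₁0, ?_⟩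
  rintro a ⟨⟨m, n⟩, hmn⟩ hp
  have hp' : ¬(M.smul a m = M.zero ∧ N.smul a n = N.zero) := fun h =>
    hp (Subtype.ext (Prod.ext h.1 h.2))
  change (if N.smul a n = N.zero then g₁ (M.smul a m) else g₂ (N.smul a n))
    = dA a + if n = N.zero then g₁ m else g₂ n
  by_cases hn : n = N.zero
  · subst hn
    rw [N.smul_zero, if_pos rfl, if_pos rfl]
    exact hg₁s a m fun h => hp' ⟨h, N.smul_zero a⟩
  · have hm : M.smul a m = M.zero := by
      rw [show m = M.zero from hmn.resolve_right hn, M.smul_zero]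
    have hn' : N.smul a n ≠ N.zero := fun h => hp' ⟨hm, h⟩
    rw [if_neg hn', if_neg hn]
    exact hg₂s a n hn'

theorem admitsGrading_zeroMod : AdmitsGrading dA (FinFMod.zeroMod (A := A)).1 :=
  ⟨fun _ => 0, rfl, fun _ _ h => absurd rfl h⟩

theorem clAdmitsGrading_clsOf {M : FinFMod A} (h : AdmitsGrading dA M.1) :
    ClAdmitsGrading dA (clsOf M) :=
  h.of_iso (nonempty_iso_out_clsOf M).some.symm

end Grading

section Cardinality

theorem nonempty_iso_of_generators {S : Set A} (hS : Submonoid.closure S = ⊤)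
    {M N : FModule A} (e : M.carrier ≃ N.carrier) (h0 : e M.zero = N.zero)
    (hgen : ∀ s ∈ S, ∀ m, e (M.smul s m) = N.smul s (e m)) : Nonempty (Iso M N) := by
  refine ⟨⟨e, h0, fun a => ?_⟩⟩
  induction (hS ▸ Submonoid.mem_top a : a ∈ Submonoid.closure S)
    using Submonoid.closure_induction with
  | mem s hs => exact hgen s hs
  | one => intro m; rw [M.one_smul, N.one_smul]
  | mul a b _ _ ha hb => intro m; rw [M.mul_smul, N.mul_smul, ha, hb]

noncomputable def IsoCl.card (c : IsoCl A) : ℕ := Nat.card (Quotient.out c).1.carrier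

theorem IsoCl.card_clsOf (M : FinFMod A) : (clsOf M).card = Nat.card M.1.carrier :=
  Nat.card_congr (nonempty_iso_out_clsOf M).some.toEquiv

/-- Once its carrier is identified with `Fin k`, a module is determined up to isomorphism by
its basepoint and the action of a finite generating set of `A`. -/
theorem IsoCl.finite_setOf_card_eq [Monoid.FG A] (k : ℕ) :
    {c : IsoCl A | c.card = k}.Finite := by
  obtain ⟨S, hS⟩ := Monoid.FG.fg_top (M := A)
  have e (c : {c : IsoCl A // c.card = k}) : (Quotient.out c.1).1.carrier ≃ Fin k :=
    have := (Quotient.out c.1).2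
    (Finite.equivFin _).trans (finCongr c.2)
  let code (c : {c : IsoCl A // c.card = k}) : Fin k × (S → Fin k → Fin k) :=
    (e c (Quotient.out c.1).1.zero,
      fun s i => e c ((Quotient.out c.1).1.smul s ((e c).symm i)))
  refine Set.finite_coe_iff.mp (Finite.of_injective code fun c c' hcode => ?_)
  obtain ⟨h0, hsmul⟩ := Prod.ext_iff.mp hcode
  have hiso : Nonempty (Iso (Quotient.out c.1).1 (Quotient.out c'.1).1) := by
    refine nonempty_iso_of_generators hS ((e c).trans (e c').symm) ?_ fun s hs m => ?_
    · simpa [Equiv.symm_apply_eq] using h0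
    · have h := congrFun (congrFun hsmul ⟨s, hs⟩) (e c m)
      simp only [code, Equiv.symm_apply_apply] at h
      exact (Equiv.symm_apply_eq _).mpr h
  exact Subtype.ext (Quotient.out_equiv_out.mp hiso)

theorem IsoCl.finite_setOf_card_le [Monoid.FG A] (n : ℕ) :
    {c : IsoCl A | c.card ≤ n}.Finite :=
  ((Set.finite_Iic n).biUnion fun k _ => finite_setOf_card_eq k).subset
    fun _ hc => Set.mem_biUnion (Set.mem_Iic.mpr hc) rfl

theorem card_le_card_quot_add_card_sub (M : FinFMod A) (N : Set M.1.carrier)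
    (hN : M.1.IsSubmod N) :
    Nat.card M.1.carrier ≤
      Nat.card (M.quot N hN).1.carrier + Nat.card (M.sub N hN).1.carrier := by
  classical
  have := M.2
  have := (M.quot N hN).2
  calc Nat.card M.1.carrier = Nat.card {m // m ∉ N} + Nat.card N := by
        rw [← Nat.card_sum]
        exact Nat.card_congr ((Equiv.sumCompl (· ∈ N)).symm.trans (Equiv.sumComm _ _))
    _ ≤ _ := Nat.add_le_add_right (Nat.card_le_card_of_injective _
        (Subtype.impEmbedding _ (fun x => x = M.1.zero ∨ x ∉ N) fun _ => Or.inr).injective) _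

theorem card_le_card_wedge_left (M N : FinFMod A) :
    Nat.card M.1.carrier ≤ Nat.card (M.wedge N).1.carrier := by
  have := (M.wedge N).2
  exact Nat.card_le_card_of_injective (fun m => ⟨(m, N.1.zero), Or.inr rfl⟩)
    fun _ _ h => congrArg (fun p : (M.wedge N).1.carrier => p.1.1) h

theorem card_le_card_wedge_right (M N : FinFMod A) :
    Nat.card N.1.carrier ≤ Nat.card (M.wedge N).1.carrier := by
  have := (M.wedge N).2
  exact Nat.card_le_card_of_injective (fun n => ⟨(M.1.zero, n), Or.inl rfl⟩)
    fun _ _ h => congrArg (fun p : (M.wedge N).1.carrier => p.1.2) h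

theorem FinSupp.exists_card_le {f : IsoCl A → ℚ} (hf : FinSupp f) :
    ∃ n, ∀ c, f c ≠ 0 → c.card ≤ n := by
  obtain ⟨n, hn⟩ := (hf.image IsoCl.card).bddAbove
  exact ⟨n, fun c hc => hn ⟨c, hc, rfl⟩⟩

theorem exists_submod_of_hallMul_ne_zero {f g : IsoCl A → ℚ} {c : IsoCl A}
    (h : hallMul f g c ≠ 0) :
    ∃ N : Submods (Quotient.out c).1,
      f (clsOf ((Quotient.out c).quot N.1 N.2)) ≠ 0 ∧
      g (clsOf ((Quotient.out c).sub N.1 N.2)) ≠ 0 := by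
  contrapose! h
  refine finsum_eq_zero_of_forall_eq_zero fun N => ?_
  by_cases hf : f (clsOf ((Quotient.out c).quot N.1 N.2)) = 0
  · rw [hf, zero_mul]
  · rw [h N hf, mul_zero]

theorem FinSupp.hallMul [Monoid.FG A] {f g : IsoCl A → ℚ} (hf : FinSupp f) (hg : FinSupp g) :
    FinSupp (hallMul f g) := by
  obtain ⟨n₁, hn₁⟩ := hf.exists_card_le
  obtain ⟨n₂, hn₂⟩ := hg.exists_card_le
  refine (IsoCl.finite_setOf_card_le (n₁ + n₂)).subset fun c hc => ?_
  obtain ⟨N, hfN, hgN⟩ := exists_submod_of_hallMul_ne_zero hc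
  have hquot := hn₁ _ hfN
  have hsub := hn₂ _ hgN
  rw [IsoCl.card_clsOf] at hquot hsub
  exact (card_le_card_quot_add_card_sub _ N.1 N.2).trans (add_le_add hquot hsub)

theorem FinSupp.coprodF [Monoid.FG A] {f : IsoCl A → ℚ} (hf : FinSupp f) :
    FinSupp₂ (coprodF f) := by
  obtain ⟨n, hn⟩ := hf.exists_card_le
  refine ((IsoCl.finite_setOf_card_le n).prod (IsoCl.finite_setOf_card_le n)).subset ?_
  rintro ⟨c, d⟩ hcd
  have hwedge := hn _ hcd
  rw [IsoCl.card_clsOf] at hwedge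
  exact ⟨(card_le_card_wedge_left _ _).trans hwedge,
    (card_le_card_wedge_right _ _).trans hwedge⟩

end Cardinality

section Jgr

variable {Γ : Type*} [AddCommMonoid Γ] {dA : A → Γ} {f g : IsoCl A → ℚ}

theorem MemJgr.counitF_eq_zero (hf : MemJgr dA f) : counitF f = 0 :=
  hf.2 _ (clAdmitsGrading_clsOf admitsGrading_zeroMod)

theorem MemJgr.hallMul_right [Monoid.FG A] (hf : MemJgr dA f) (hg : FinSupp g) :
    MemJgr dA (hallMul f g) :=
  ⟨hf.1.hallMul hg, fun _ hc => finsum_eq_zero_of_forall_eq_zero fun N => by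
    rw [hf.2 _ (clAdmitsGrading_clsOf (hc.quot N.2)), zero_mul]⟩

theorem MemJgr.hallMul_left [Monoid.FG A] (hg : MemJgr dA g) (hf : FinSupp f) :
    MemJgr dA (hallMul f g) :=
  ⟨hf.hallMul hg.1, fun _ hc => finsum_eq_zero_of_forall_eq_zero fun N => by
    rw [hg.2 _ (clAdmitsGrading_clsOf (hc.sub N.2)), mul_zero]⟩

theorem MemJgr.exists_coprodF_eq_add [Monoid.FG A] (hf : MemJgr dA f) :
    ∃ F G : IsoCl A → IsoCl A → ℚ, FinSupp₂ F ∧ FinSupp₂ G ∧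
      (∀ c d, coprodF f c d = F c d + G c d) ∧
      (∀ c d, ClAdmitsGrading dA c → F c d = 0) ∧
      (∀ c d, ClAdmitsGrading dA d → G c d = 0) := by
  classical
  have hΔ := hf.1.coprodF
  refine ⟨fun c d => if ClAdmitsGrading dA c then 0 else coprodF f c d,
    fun c d => if ClAdmitsGrading dA c then coprodF f c d else 0,
    hΔ.subset fun ⟨_, _⟩ hx h => hx (by simp_all),
    hΔ.subset fun ⟨_, _⟩ hx h => hx (by simp_all),
    fun c d => by by_cases hc : ClAdmitsGrading dA c <;> simp [hc],
    fun _ _ hc => if_pos hc, fun c d hd => ?_⟩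
  dsimp only
  split_ifs with hc
  · exact hf.2 _ (clAdmitsGrading_clsOf (hc.wedge hd))
  · rfl

end Jgr

end FModule

open FModule in
theorem Jgr_is_hopf_ideal_general (A : Type v) [MonoidWithZero A] [Monoid.FG A]
    (Γ : Type*) [AddCommMonoid Γ] (dA : A → Γ) :
    -- contained in the augmentation ideal
    (∀ f : IsoCl A → ℚ, MemJgr dA f → counitF f = 0) ∧
    -- two-sided ideal for ⋆
    (∀ f g : IsoCl A → ℚ, MemJgr dA f → FinSupp g → MemJgr dA (hallMul f g)) ∧
    (∀ f g : IsoCl A → ℚ, FinSupp f → MemJgr dA g → MemJgr dA (hallMul f g)) ∧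
    -- co-ideal: Δ(J^{gr}) ⊆ J^{gr} ⊗ H + H ⊗ J^{gr}
    (∀ f : IsoCl A → ℚ, MemJgr dA f →
      ∃ F G : IsoCl A → IsoCl A → ℚ, FinSupp₂ F ∧ FinSupp₂ G ∧
        (∀ c d : IsoCl A, coprodF f c d = F c d + G c d) ∧
        (∀ c d : IsoCl A, ClAdmitsGrading dA c → F c d = 0) ∧
        (∀ c d : IsoCl A, ClAdmitsGrading dA d → G c d = 0)) :=
  ⟨fun _ hf => hf.counitF_eq_zero, fun _ _ hf hg => hf.hallMul_right hg,
    fun _ _ hf hg => hg.hallMul_left hf, fun _ hf => hf.exists_coprodF_eq_add⟩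

open FModule in
/-- **`J^{gr}` is a Hopf ideal of the Hall algebra `H_A`** for a finitely generated
`Γ`-graded monoid `A`: a two-sided ideal for the convolution product, a co-ideal for
the coproduct, contained in the augmentation ideal. -/
theorem Jgr_is_hopf_ideal (A : Type v) [MonoidWithZero A] [Monoid.FG A]
    (Γ : Type*) [AddCommMonoid Γ] (dA : A → Γ) (hdA : IsMonoidGrading dA) :
    -- contained in the augmentation ideal
    (∀ f : IsoCl A → ℚ, MemJgr dA f → counitF f = 0) ∧
    -- two-sided ideal for ⋆
    (∀ f g : IsoCl A → ℚ, MemJgr dA f → FinSupp g → MemJgr dA (hallMul f g)) ∧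
    (∀ f g : IsoCl A → ℚ, FinSupp f → MemJgr dA g → MemJgr dA (hallMul f g)) ∧
    -- co-ideal: Δ(J^{gr}) ⊆ J^{gr} ⊗ H + H ⊗ J^{gr}
    (∀ f : IsoCl A → ℚ, MemJgr dA f →
      ∃ F G : IsoCl A → IsoCl A → ℚ, FinSupp₂ F ∧ FinSupp₂ G ∧
        (∀ c d : IsoCl A, coprodF f c d = F c d + G c d) ∧
        (∀ c d : IsoCl A, ClAdmitsGrading dA c → F c d = 0) ∧
        (∀ c d : IsoCl A, ClAdmitsGrading dA d → G c d = 0)) :=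
  Jgr_is_hopf_ideal_general A Γ dA
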